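/- arXiv:1902.08998 — 2 statements merged into one kernel-verified Lean document; each statement's English description precedes it below -/
import Mathlib

section
/- Suppose real numbers $\Gamma_1 \leq \cdots \leq \Gamma_k \leq \Gamma_{k+1}$ and $c_1, \ldots, c_k \in [0,1]$ satisfy $\Gamma_{k+1}\left(A r^n - (2\pi)^n \sum_{j=1}^k c_j\right) \leq \frac{n}{n+2p} A r^{n+2p} - (2\pi)^n \sum_{j=1}^k \Gamma_j c_j$ for some $r$ with $A r^n > k(2\pi)^n$, where $A > 0$ and all $\Gamma_j \geq 0$. Then $\sum_{j=1}^k \Gamma_j \leq \frac{n A r^{n+2p}}{(n+2p)(2\pi)^n}$. -/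
/-!
Since `Γ_j ≤ Γ_{k+1}` and `c_j ≤ 1`, each `Γ_j` is at most `Γ_j c_j + Γ_{k+1} (1 - c_j)`. Summing,
`(2π)ⁿ ∑ Γ_j ≤ (2π)ⁿ ∑ Γ_j c_j + Γ_{k+1} (k (2π)ⁿ - (2π)ⁿ ∑ c_j)`; as `Γ_{k+1} ≥ 0` and
`k (2π)ⁿ < A rⁿ`, this is at most `(2π)ⁿ ∑ Γ_j c_j + Γ_{k+1} (A rⁿ - (2π)ⁿ ∑ c_j) ≤ n/(n+2p) A r^{n+2p}`.
-/

open Finset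

theorem sum_le_sum_mul_add_mul_card_sub_sum {ι R : Type*} [CommRing R] [PartialOrder R]
    [IsOrderedRing R] (s : Finset ι) (Γ c : ι → R) (M : R) (hΓ : ∀ j ∈ s, Γ j ≤ M)
    (hc : ∀ j ∈ s, c j ≤ 1) :
    ∑ j ∈ s, Γ j ≤ ∑ j ∈ s, Γ j * c j + M * (#s - ∑ j ∈ s, c j) := by
  have hterm : ∀ j ∈ s, Γ j ≤ Γ j * c j + M * (1 - c j) := fun j hj => by
    have := mul_le_mul_of_nonneg_right (hΓ j hj) (sub_nonneg.2 (hc j hj))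
    linear_combination this
  calc ∑ j ∈ s, Γ j ≤ ∑ j ∈ s, (Γ j * c j + M * (1 - c j)) := sum_le_sum hterm
    _ = ∑ j ∈ s, Γ j * c j + M * (#s - ∑ j ∈ s, c j) := by
      simp only [sum_add_distrib, ← mul_sum, sum_sub_distrib, sum_const, nsmul_one]

theorem kroger_averaging_step_general (n p k : ℕ)
    (A r : ℝ)
    (hrange : k * (2 * Real.pi) ^ n < A * r ^ n)
    (Γ : ℕ → ℝ) (hΓnonneg : ∀ j, 0 ≤ Γ j)
    (hΓmono : ∀ i j, i ≤ j → j ≤ k + 1 → Γ i ≤ Γ j)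
    (c : ℕ → ℝ) (hc1 : ∀ j, c j ≤ 1)
    (hineq : Γ (k + 1) * (A * r ^ n - (2 * Real.pi) ^ n * ∑ j ∈ Finset.Icc 1 k, c j) ≤
      (n : ℝ) / ((n : ℝ) + 2 * p) * A * r ^ (n + 2 * p) -
        (2 * Real.pi) ^ n * ∑ j ∈ Finset.Icc 1 k, Γ j * c j) :
    ∑ j ∈ Finset.Icc 1 k, Γ j ≤
      (n : ℝ) * A * r ^ (n + 2 * p) / (((n : ℝ) + 2 * p) * (2 * Real.pi) ^ n) := by
  have hB : (0 : ℝ) < (2 * Real.pi) ^ n := by positivity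
  have hsum := sum_le_sum_mul_add_mul_card_sub_sum (Icc 1 k) Γ c (Γ (k + 1))
    (fun j hj => hΓmono j (k + 1) (by grind) le_rfl) (fun j _ => hc1 j)
  rw [Nat.card_Icc, Nat.add_sub_cancel] at hsum
  have hΓrange := mul_le_mul_of_nonneg_left hrange.le (hΓnonneg (k + 1))
  rw [show (n : ℝ) * A * r ^ (n + 2 * p) / (((n : ℝ) + 2 * p) * (2 * Real.pi) ^ n) =
      (n : ℝ) / ((n : ℝ) + 2 * p) * A * r ^ (n + 2 * p) / (2 * Real.pi) ^ n by
        rw [← div_div]; ring,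
    le_div_iff₀ hB]
  calc (∑ j ∈ Icc 1 k, Γ j) * (2 * Real.pi) ^ n
      ≤ (∑ j ∈ Icc 1 k, Γ j * c j + Γ (k + 1) * (k - ∑ j ∈ Icc 1 k, c j)) * (2 * Real.pi) ^ n :=
        mul_le_mul_of_nonneg_right hsum hB.le
    _ ≤ (2 * Real.pi) ^ n * ∑ j ∈ Icc 1 k, Γ j * c j +
          Γ (k + 1) * (A * r ^ n - (2 * Real.pi) ^ n * ∑ j ∈ Icc 1 k, c j) := by
        linear_combination hΓrange
    _ ≤ _ := by linarith

/-- Key algebraic step in the Kröger-type averaging argument: if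
`Γ₁ ≤ ⋯ ≤ Γ_k ≤ Γ_{k+1}` are nonnegative, `c_j ∈ [0,1]`, `A rⁿ > k(2π)ⁿ`, and
`Γ_{k+1} (A rⁿ - (2π)ⁿ ∑ c_j) ≤ (n/(n+2p)) A r^{n+2p} - (2π)ⁿ ∑ Γ_j c_j`,
then `∑_{j=1}^k Γ_j ≤ n A r^{n+2p} / ((n+2p)(2π)ⁿ)`. -/
theorem kroger_averaging_step (n p k : ℕ) (hn : 0 < n) (hp : 0 < p) (hk : 1 ≤ k)
    (A r : ℝ) (hA : 0 < A) (hr : 0 < r)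
    (hrange : k * (2 * Real.pi) ^ n < A * r ^ n)
    (Γ : ℕ → ℝ) (hΓnonneg : ∀ j, 0 ≤ Γ j)
    (hΓmono : ∀ i j, i ≤ j → j ≤ k + 1 → Γ i ≤ Γ j)
    (c : ℕ → ℝ) (hc0 : ∀ j, 0 ≤ c j) (hc1 : ∀ j, c j ≤ 1)
    (hineq : Γ (k + 1) * (A * r ^ n - (2 * Real.pi) ^ n * ∑ j ∈ Finset.Icc 1 k, c j) ≤
      (n : ℝ) / ((n : ℝ) + 2 * p) * A * r ^ (n + 2 * p) -
        (2 * Real.pi) ^ n * ∑ j ∈ Finset.Icc 1 k, Γ j * c j) :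
    ∑ j ∈ Finset.Icc 1 k, Γ j ≤
      (n : ℝ) * A * r ^ (n + 2 * p) / (((n : ℝ) + 2 * p) * (2 * Real.pi) ^ n) :=
  kroger_averaging_step_general n p k A r hrange Γ hΓnonneg hΓmono c hc1 hineq
end

section
/- Let $\phi_1, \ldots, \phi_k$ be an orthonormal set in $L^2(\Omega)$ for a bounded domain $\Omega \subset \mathbb{R}^n$, extend each $\phi_j$ by zero to $\mathbb{R}^n$, and let $\hat\phi_j$ denote the Fourier transform. Let $h_z(x) = e^{ix\cdot z}$ and $\rho(z,y) = h_z(y) - (2\pi)^{n/2}\sum_{j=1}^k \phi_j(y)\overline{\hat\phi_j(-z)}$ (the projection remainder). Then for every $r > 0$: $\int_{B_r}\int_\Omega |\rho(z,y)|^2\, dy\, dz = \omega_n |\Omega| r^n - (2\pi)^n \sum_{j=1}^k \int_{B_r} |\hat\phi_j(z)|^2\, dz$, where $B_r$ is the ball of radius $r$ centered at the origin in $\mathbb{R}^n$. -/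
open MeasureTheory

/-- The Fourier transform (in the paper's normalization) of a real-valued function
supported in `Ω ⊂ ℝⁿ`: `φ̂(z) = (2π)^{-n/2} ∫_Ω φ(x) e^{i x·z} dx`. -/
noncomputable def fourierOn {n : ℕ} (Ω : Set (EuclideanSpace ℝ (Fin n)))
    (φ : EuclideanSpace ℝ (Fin n) → ℝ) (z : EuclideanSpace ℝ (Fin n)) : ℂ :=
  (((2 * Real.pi) ^ (-(n : ℝ) / 2) : ℝ) : ℂ) *
    ∫ x in Ω, (φ x : ℂ) * Complex.exp (Complex.I * ((inner ℝ x z : ℝ) : ℂ))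

/-!
For fixed `z`, the coefficients `(2π)^{n/2} conj (φ̂_j(-z)) = (2π)^{n/2} φ̂_j(z) = ⟨φ_j, h_z⟩`
make `y ↦ (2π)^{n/2} ∑ φ_j(y) conj (φ̂_j(-z))` the orthogonal projection of `h_z` onto the span of
the `φ_j` in `L²(Ω)`. Bessel's identity `‖h - Ph‖² = ‖h‖² - ∑ |⟨φ_j, h⟩|²` together with
`|h_z| = 1` gives `∫_Ω |ρ(z, y)|² dy = |Ω| - (2π)ⁿ ∑ |φ̂_j(z)|²`, and integrating over `B_r`,
whose volume is `ω_n rⁿ`, gives the claim.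
-/

open scoped InnerProductSpace ComplexConjugate

theorem Orthonormal.norm_sub_sum_inner_smul_sq {𝕜 E ι : Type*} [RCLike 𝕜] [NormedAddCommGroup E]
    [InnerProductSpace 𝕜 E] {v : ι → E} (hv : Orthonormal 𝕜 v) (s : Finset ι) (x : E) :
    ‖x - ∑ i ∈ s, ⟪v i, x⟫_𝕜 • v i‖ ^ 2 = ‖x‖ ^ 2 - ∑ i ∈ s, ‖⟪v i, x⟫_𝕜‖ ^ 2 := by
  set p := ∑ i ∈ s, ⟪v i, x⟫_𝕜 • v i
  have hxp : ⟪x, p⟫_𝕜 = ((∑ i ∈ s, ‖⟪v i, x⟫_𝕜‖ ^ 2 : ℝ) : 𝕜) := by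
    push_cast
    refine (inner_sum _ _ _).trans (Finset.sum_congr rfl fun i _ => ?_)
    rw [inner_smul_right, ← inner_conj_symm x (v i), RCLike.mul_conj]
  have hpp : ‖p‖ ^ 2 = ∑ i ∈ s, ‖⟪v i, x⟫_𝕜‖ ^ 2 := by
    rw [@norm_sq_eq_re_inner 𝕜, hv.inner_sum]
    simp only [RCLike.conj_mul, ← RCLike.ofReal_pow, ← RCLike.ofReal_sum, RCLike.ofReal_re]
  rw [@norm_sub_sq 𝕜, hxp, RCLike.ofReal_re, hpp]
  ring

namespace MeasureTheory

variable {α E : Type*} {m : MeasurableSpace α} {μ : Measure α} [NormedAddCommGroup E]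

theorem memLp_two_of_integral_mul_self_ne_zero {f : α → ℝ} (hf : AEStronglyMeasurable f μ)
    (h : ∫ x, f x * f x ∂μ ≠ 0) : MemLp f 2 μ :=
  (memLp_two_iff_integrable_sq hf).2
    ((Integrable.of_integral_ne_zero h).congr (ae_of_all _ fun x => (sq (f x)).symm))

theorem Lp.norm_sq_eq_integral_norm_sq (f : Lp E 2 μ) : ‖f‖ ^ 2 = ∫ x, ‖f x‖ ^ 2 ∂μ := by
  rw [Lp.norm_def, toReal_eLpNorm (Lp.aestronglyMeasurable f), lpNorm_eq_integral_norm_rpow_toReal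
    two_ne_zero ENNReal.ofNat_ne_top (Lp.aestronglyMeasurable f)]
  simp only [ENNReal.toReal_ofNat, Real.rpow_two]
  exact_mod_cast Real.rpow_inv_natCast_pow (integral_nonneg fun x => by positivity) two_ne_zero

theorem MemLp.norm_toLp_sq {f : α → E} (hf : MemLp f 2 μ) :
    ‖hf.toLp f‖ ^ 2 = ∫ x, ‖f x‖ ^ 2 ∂μ := by
  rw [Lp.norm_sq_eq_integral_norm_sq]
  exact integral_congr_ae (hf.coeFn_toLp.fun_comp (‖·‖ ^ 2))

variable {𝕜 : Type*} [RCLike 𝕜] [InnerProductSpace 𝕜 E]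

theorem L2.inner_toLp_toLp {f g : α → E} (hf : MemLp f 2 μ) (hg : MemLp g 2 μ) :
    ⟪hf.toLp f, hg.toLp g⟫_𝕜 = ∫ x, ⟪f x, g x⟫_𝕜 ∂μ := by
  refine integral_congr_ae ?_
  filter_upwards [hf.coeFn_toLp, hg.coeFn_toLp] with x hfx hgx
  rw [hfx, hgx]

theorem integral_norm_sub_sum_integral_inner_smul_sq {ι : Type*} [Fintype ι] [DecidableEq ι]
    {u : ι → α → E} {f : α → E} (hu : ∀ i, MemLp (u i) 2 μ) (hf : MemLp f 2 μ)
    (hortho : ∀ i j, ∫ x, ⟪u i x, u j x⟫_𝕜 ∂μ = if i = j then 1 else 0) :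
    ∫ x, ‖f x - ∑ i, (∫ y, ⟪u i y, f y⟫_𝕜 ∂μ) • u i x‖ ^ 2 ∂μ =
      ∫ x, ‖f x‖ ^ 2 ∂μ - ∑ i, ‖∫ y, ⟪u i y, f y⟫_𝕜 ∂μ‖ ^ 2 := by
  set U : ι → Lp E 2 μ := fun i => (hu i).toLp
  set F : Lp E 2 μ := hf.toLp f
  have hU : Orthonormal 𝕜 U :=
    orthonormal_iff_ite.mpr fun i j => (L2.inner_toLp_toLp _ _).trans (hortho i j)
  have hc : ∀ i, ⟪U i, F⟫_𝕜 = ∫ y, ⟪u i y, f y⟫_𝕜 ∂μ := fun i => L2.inner_toLp_toLp _ _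
  have hterm : ∀ᵐ x ∂μ, ∀ i, (⟪U i, F⟫_𝕜 • U i) x = (∫ y, ⟪u i y, f y⟫_𝕜 ∂μ) • u i x := by
    refine ae_all_iff.2 fun i => ?_
    filter_upwards [Lp.coeFn_smul ⟪U i, F⟫_𝕜 (U i), (hu i).coeFn_toLp] with x hsx hux
    rw [hsx, Pi.smul_apply, hux, hc]
  have hae : ⇑(F - ∑ i, ⟪U i, F⟫_𝕜 • U i) =ᵐ[μ]
      fun x => f x - ∑ i, (∫ y, ⟪u i y, f y⟫_𝕜 ∂μ) • u i x := by
    filter_upwards [Lp.coeFn_sub F (∑ i, ⟪U i, F⟫_𝕜 • U i),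
      Lp.coeFn_fun_finsetSum Finset.univ fun i => ⟪U i, F⟫_𝕜 • U i, hf.coeFn_toLp, hterm]
      with x hsub hsum hfx hx
    rw [hsub, Pi.sub_apply, hsum, hfx]
    simp only [hx]
  calc ∫ x, ‖f x - ∑ i, (∫ y, ⟪u i y, f y⟫_𝕜 ∂μ) • u i x‖ ^ 2 ∂μ
      = ‖F - ∑ i, ⟪U i, F⟫_𝕜 • U i‖ ^ 2 := by
        rw [Lp.norm_sq_eq_integral_norm_sq]
        exact integral_congr_ae (hae.fun_comp (‖·‖ ^ 2)).symm
    _ = ‖F‖ ^ 2 - ∑ i, ‖⟪U i, F⟫_𝕜‖ ^ 2 := hU.norm_sub_sum_inner_smul_sq _ _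
    _ = _ := by simp only [F, hf.norm_toLp_sq, hc]

end MeasureTheory

open Complex

theorem norm_two_pi_rpow_half_sq (n : ℕ) :
    ‖(((2 * Real.pi) ^ ((n : ℝ) / 2) : ℝ) : ℂ)‖ ^ 2 = (2 * Real.pi) ^ n := by
  rw [norm_real, Real.norm_of_nonneg (by positivity), ← Real.rpow_mul_natCast Real.two_pi_pos.le]
  norm_num

section Fourier

variable {n : ℕ} (Ω : Set (EuclideanSpace ℝ (Fin n)))

theorem fourierOn_neg (φ : EuclideanSpace ℝ (Fin n) → ℝ) (z : EuclideanSpace ℝ (Fin n)) :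
    fourierOn Ω φ (-z) = conj (fourierOn Ω φ z) := by
  simp only [fourierOn, map_mul, conj_ofReal, ← integral_conj, ← exp_conj, conj_I,
    inner_neg_right, ofReal_neg]
  congr 2 with x
  ring_nf

theorem two_pi_rpow_mul_fourierOn (φ : EuclideanSpace ℝ (Fin n) → ℝ)
    (z : EuclideanSpace ℝ (Fin n)) :
    (((2 * Real.pi) ^ ((n : ℝ) / 2) : ℝ) : ℂ) * fourierOn Ω φ z =
      ∫ x in Ω, (φ x : ℂ) * exp (I * ((inner ℝ x z : ℝ) : ℂ)) := by
  rw [fourierOn, ← mul_assoc, ← ofReal_mul, ← Real.rpow_add Real.two_pi_pos,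
    show (n : ℝ) / 2 + -(n : ℝ) / 2 = 0 by ring, Real.rpow_zero, ofReal_one, one_mul]

theorem continuous_fourierOn {φ : EuclideanSpace ℝ (Fin n) → ℝ} (hφ : IntegrableOn φ Ω) :
    Continuous (fourierOn Ω φ) := by
  refine continuous_const.mul (continuous_of_dominated (bound := fun x => ‖φ x‖) (fun z => ?_)
    (fun z => ?_) hφ.norm (ae_of_all _ fun x => ?_))
  · exact hφ.ofReal.aestronglyMeasurable.mul (by fun_prop)
  · exact ae_of_all _ fun x => by rw [norm_mul, norm_exp_I_mul_ofReal, mul_one, norm_real]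
  · fun_prop

theorem setIntegral_norm_sq_exp_sub_sum_fourierOn {k : ℕ} (hΩ : volume Ω ≠ ⊤)
    (φ : Fin k → EuclideanSpace ℝ (Fin n) → ℝ) (hφ : ∀ j, MemLp (φ j) 2 (volume.restrict Ω))
    (hortho : ∀ i j, ∫ x in Ω, φ i x * φ j x = if i = j then (1 : ℝ) else 0)
    (z : EuclideanSpace ℝ (Fin n)) :
    ∫ y in Ω, ‖exp (I * ((inner ℝ y z : ℝ) : ℂ)) -
          (((2 * Real.pi) ^ ((n : ℝ) / 2) : ℝ) : ℂ) *
            ∑ j, (φ j y : ℂ) * conj (fourierOn Ω (φ j) (-z))‖ ^ 2 =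
      (volume Ω).toReal - (2 * Real.pi) ^ n * ∑ j, ‖fourierOn Ω (φ j) z‖ ^ 2 := by
  have : IsFiniteMeasure (volume.restrict Ω) := isFiniteMeasure_restrict.2 hΩ
  have he : MemLp (fun y => exp (I * ((inner ℝ y z : ℝ) : ℂ))) 2 (volume.restrict Ω) :=
    .of_bound (by fun_prop) 1 (ae_of_all _ fun y => (norm_exp_I_mul_ofReal _).le)
  have hortho' : ∀ i j, ∫ x in Ω, ⟪(φ i x : ℂ), (φ j x : ℂ)⟫_ℂ = if i = j then 1 else 0 := by
    intro i j
    simp only [RCLike.inner_apply', conj_ofReal]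
    norm_cast
    rw [hortho i j]
    split_ifs <;> simp
  have hc : ∀ j, ∫ x in Ω, ⟪(φ j x : ℂ), exp (I * ((inner ℝ x z : ℝ) : ℂ))⟫_ℂ =
      (((2 * Real.pi) ^ ((n : ℝ) / 2) : ℝ) : ℂ) * fourierOn Ω (φ j) z := fun j => by
    simp only [two_pi_rpow_mul_fourierOn, RCLike.inner_apply', conj_ofReal]
  have hproj : ∀ y, (((2 * Real.pi) ^ ((n : ℝ) / 2) : ℝ) : ℂ) *
      ∑ j, (φ j y : ℂ) * conj (fourierOn Ω (φ j) (-z)) =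
      ∑ j, (∫ x in Ω, ⟪(φ j x : ℂ), exp (I * ((inner ℝ x z : ℝ) : ℂ))⟫_ℂ) • (φ j y : ℂ) := by
    intro y
    simp only [hc, fourierOn_neg, conj_conj, Finset.mul_sum, smul_eq_mul]
    exact Finset.sum_congr rfl fun j _ => by ring
  have hnorm : ∫ y in Ω, ‖exp (I * ((inner ℝ y z : ℝ) : ℂ))‖ ^ 2 = (volume Ω).toReal := by
    simp [norm_exp_I_mul_ofReal, measureReal_def]
  simp only [hproj]
  rw [integral_norm_sub_sum_integral_inner_smul_sq (fun j => (hφ j).ofReal) he hortho', hnorm,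
    Finset.mul_sum]
  simp only [hc, norm_mul, mul_pow, norm_two_pi_rpow_half_sq]

end Fourier

theorem projection_remainder_norm_sq_general
    (n k : ℕ)
    (Ω : Set (EuclideanSpace ℝ (Fin n)))
    (hΩbdd : Bornology.IsBounded Ω)
    (φ : Fin k → EuclideanSpace ℝ (Fin n) → ℝ)
    (hmeas : ∀ j, Measurable (φ j))
    (hortho : ∀ i j, ∫ x in Ω, φ i x * φ j x = if i = j then (1 : ℝ) else 0)
    (r : ℝ) (hr : 0 < r) :
    (∫ z in Metric.ball (0 : EuclideanSpace ℝ (Fin n)) r, ∫ y in Ω,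
        ‖Complex.exp (Complex.I * ((inner ℝ y z : ℝ) : ℂ)) -
          (((2 * Real.pi) ^ ((n : ℝ) / 2) : ℝ) : ℂ) *
            ∑ j, (φ j y : ℂ) * (starRingEnd ℂ) (fourierOn Ω (φ j) (-z))‖ ^ 2) =
      (volume (Metric.ball (0 : EuclideanSpace ℝ (Fin n)) 1)).toReal *
        (volume Ω).toReal * r ^ n -
      (2 * Real.pi) ^ n * ∑ j, ∫ z in Metric.ball (0 : EuclideanSpace ℝ (Fin n)) r,
        ‖fourierOn Ω (φ j) z‖ ^ 2 := by
  have hΩ : volume Ω ≠ ⊤ := hΩbdd.measure_lt_top.ne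
  have : IsFiniteMeasure (volume.restrict Ω) := isFiniteMeasure_restrict.2 hΩ
  have hL2 : ∀ j, MemLp (φ j) 2 (volume.restrict Ω) := fun j =>
    memLp_two_of_integral_mul_self_ne_zero (hmeas j).aestronglyMeasurable (by simp [hortho])
  have hint : ∀ j, IntegrableOn (fun z => ‖fourierOn Ω (φ j) z‖ ^ 2)
      (Metric.ball (0 : EuclideanSpace ℝ (Fin n)) r) := fun j =>
    (((continuous_fourierOn Ω ((hL2 j).integrable one_le_two)).norm.pow 2).continuousOn
      |>.integrableOn_compact (isCompact_closedBall 0 r)).mono_set Metric.ball_subset_closedBall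
  simp only [setIntegral_norm_sq_exp_sub_sum_fourierOn Ω hΩ φ hL2 hortho]
  rw [integral_sub (integrableOn_const (C := (volume Ω).toReal))
      ((integrable_finsetSum _ fun j _ => hint j).const_mul _),
    setIntegral_const, integral_const_mul, integral_finsetSum _ fun j _ => hint j,
    measureReal_def, Measure.addHaar_ball_of_pos _ _ hr, finrank_euclideanSpace_fin,
    ENNReal.toReal_mul, ENNReal.toReal_ofReal (by positivity), smul_eq_mul]
  ring

/-- For an orthonormal set `φ_1, …, φ_k` in `L²(Ω)` (extended by zero), the projection
remainder `ρ(z,y) = e^{iy·z} - (2π)^{n/2} ∑_j φ_j(y) conj(φ̂_j(-z))` satisfies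
`∫_{B_r}∫_Ω |ρ|² = ω_n|Ω|rⁿ - (2π)ⁿ ∑_j ∫_{B_r} |φ̂_j|²` for every `r > 0`. -/
theorem projection_remainder_norm_sq
    (n k : ℕ) (hn : 0 < n)
    (Ω : Set (EuclideanSpace ℝ (Fin n))) (hΩmeas : MeasurableSet Ω)
    (hΩbdd : Bornology.IsBounded Ω) (hΩne : Ω.Nonempty)
    (φ : Fin k → EuclideanSpace ℝ (Fin n) → ℝ)
    (hmeas : ∀ j, Measurable (φ j))
    (hortho : ∀ i j, ∫ x in Ω, φ i x * φ j x = if i = j then (1 : ℝ) else 0)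
    (r : ℝ) (hr : 0 < r) :
    (∫ z in Metric.ball (0 : EuclideanSpace ℝ (Fin n)) r, ∫ y in Ω,
        ‖Complex.exp (Complex.I * ((inner ℝ y z : ℝ) : ℂ)) -
          (((2 * Real.pi) ^ ((n : ℝ) / 2) : ℝ) : ℂ) *
            ∑ j, (φ j y : ℂ) * (starRingEnd ℂ) (fourierOn Ω (φ j) (-z))‖ ^ 2) =
      (volume (Metric.ball (0 : EuclideanSpace ℝ (Fin n)) 1)).toReal *
        (volume Ω).toReal * r ^ n -
      (2 * Real.pi) ^ n * ∑ j, ∫ z in Metric.ball (0 : EuclideanSpace ℝ (Fin n)) r,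
        ‖fourierOn Ω (φ j) z‖ ^ 2 :=
  projection_remainder_norm_sq_general n k Ω hΩbdd φ hmeas hortho r hr
end
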